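/- arXiv:2605.06945 — 6 statements merged into one kernel-verified Lean document; each statement's English description precedes it below -/
import Mathlib

section
/- Let ℓ(p,y) = -y·log(σ(p)) - (1-y)·log(1-σ(p)) be the binary cross-entropy loss, where σ(p) = 1/(1+e^{-p}) is the logistic sigmoid, with p ∈ ℝ and y ∈ ℝ. Define the auxiliary loss z(p) = arcsin(tanh(p/2)) and let v(p) denote the derivative of z at p. Then for every p ∈ ℝ and y ∈ ℝ, (v(p))² = σ(p)·(1-σ(p)), and this equals the second derivative of ℓ with respect to p, i.e., (v(p))² = d²ℓ/dp²(p,y). -/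
/-- The logistic sigmoid `σ(p) = 1/(1+e^{-p})`. -/
noncomputable def logisticSigmoid (p : ℝ) : ℝ := 1 / (1 + Real.exp (-p))

/-- The binary cross-entropy loss `ℓ(p,y) = -y log σ(p) - (1-y) log(1-σ(p))`. -/
noncomputable def bceLoss (p y : ℝ) : ℝ :=
  -y * Real.log (logisticSigmoid p) - (1 - y) * Real.log (1 - logisticSigmoid p)

/-- The auxiliary loss `z(p) = arcsin(tanh(p/2))`. -/
noncomputable def auxLoss (p : ℝ) : ℝ := Real.arcsin (Real.tanh (p / 2))

lemma tanh_hasDerivAt (x : ℝ) : HasDerivAt Real.tanh (1 - Real.tanh x ^ 2) x := by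
  have hc : Real.cosh x ≠ 0 := ne_of_gt (Real.cosh_pos x)
  have h := (Real.hasDerivAt_sinh x).div (Real.hasDerivAt_cosh x) hc
  have heq : (Real.cosh x * Real.cosh x - Real.sinh x * Real.sinh x) / Real.cosh x ^ 2
      = 1 - Real.tanh x ^ 2 := by
    rw [Real.tanh_eq_sinh_div_cosh]
    have h1 : Real.cosh x ^ 2 - Real.sinh x ^ 2 = 1 := Real.cosh_sq_sub_sinh_sq x
    field_simp
  rw [heq] at h
  exact h.congr_of_eventuallyEq
    (Filter.Eventually.of_forall fun y => Real.tanh_eq_sinh_div_cosh y)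

lemma tanh_sq_lt_one (x : ℝ) : Real.tanh x ^ 2 < 1 := by
  rw [Real.tanh_eq_sinh_div_cosh, div_pow, div_lt_one (by positivity)]
  nlinarith [Real.cosh_sq_sub_sinh_sq x]

lemma one_add_exp_pos (q : ℝ) : 0 < 1 + Real.exp (-q) := by positivity

lemma bce_eq (q y : ℝ) :
    bceLoss q y = Real.log (1 + Real.exp (-q)) + (1 - y) * q := by
  have hpos := one_add_exp_pos q
  have hσ : logisticSigmoid q = 1 / (1 + Real.exp (-q)) := rfl
  have h1 : 1 - logisticSigmoid q = Real.exp (-q) / (1 + Real.exp (-q)) := by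
    rw [hσ]; field_simp; ring
  have hl1 : Real.log (logisticSigmoid q) = -Real.log (1 + Real.exp (-q)) := by
    rw [hσ, Real.log_div one_ne_zero (ne_of_gt hpos), Real.log_one]; ring
  have hl2 : Real.log (1 - logisticSigmoid q)
      = -q - Real.log (1 + Real.exp (-q)) := by
    rw [h1, Real.log_div (Real.exp_ne_zero _) (ne_of_gt hpos), Real.log_exp]
  unfold bceLoss
  rw [hl1, hl2]; ring

lemma bce_deriv (y : ℝ) :
    deriv (fun q : ℝ => bceLoss q y)
      = fun q => -Real.exp (-q) / (1 + Real.exp (-q)) + (1 - y) := by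
  funext q
  have hpos := one_add_exp_pos q
  have h1 : HasDerivAt (fun x : ℝ => 1 + Real.exp (-x)) (-Real.exp (-q)) q := by
    have := ((hasDerivAt_neg q).exp).const_add 1
    simpa using this
  have h2 : HasDerivAt (fun x : ℝ => Real.log (1 + Real.exp (-x)) + (1 - y) * x)
      (-Real.exp (-q) / (1 + Real.exp (-q)) + (1 - y)) q := by
    have h3 : HasDerivAt (fun x : ℝ => (1 - y) * x) (1 - y) q := by
      simpa using (hasDerivAt_id q).const_mul (1 - y)
    exact (h1.log (ne_of_gt hpos)).add h3
  have hfun : (fun q : ℝ => bceLoss q y)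
      = fun q : ℝ => Real.log (1 + Real.exp (-q)) + (1 - y) * q := by
    funext x; exact bce_eq x y
  rw [hfun]
  exact h2.deriv

lemma bce_snd_deriv (y p : ℝ) :
    deriv (deriv (fun q : ℝ => bceLoss q y)) p
      = Real.exp (-p) / (1 + Real.exp (-p)) ^ 2 := by
  rw [bce_deriv]
  have hpos := one_add_exp_pos p
  have hd : HasDerivAt (fun x : ℝ => Real.exp (-x)) (-Real.exp (-p)) p := by
    simpa using (hasDerivAt_neg p).exp
  have h1 : HasDerivAt (fun x : ℝ => 1 + Real.exp (-x)) (-Real.exp (-p)) p := by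
    simpa using hd.const_add 1
  have h2 : HasDerivAt
      (fun x : ℝ => -Real.exp (-x) / (1 + Real.exp (-x)) + (1 - y))
      (Real.exp (-p) / (1 + Real.exp (-p)) ^ 2) p := by
    have := (hd.neg.div h1 (ne_of_gt hpos)).add_const (1 - y)
    refine this.congr_deriv ?_
    simp only [Pi.neg_apply]
    ring
  exact h2.deriv

lemma sigmoid_eq (p : ℝ) :
    logisticSigmoid p * (1 - logisticSigmoid p)
      = Real.exp (-p) / (1 + Real.exp (-p)) ^ 2 := by
  have hpos := one_add_exp_pos p
  unfold logisticSigmoid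
  field_simp
  ring

lemma auxLoss_deriv_sq (p : ℝ) :
    (deriv auxLoss p) ^ 2 = (1 - Real.tanh (p / 2) ^ 2) / 4 := by
  set t := Real.tanh (p / 2) with ht
  have hsq := tanh_sq_lt_one (p / 2)
  have hspos : (0:ℝ) < 1 - t ^ 2 := by rw [ht]; linarith
  have hne1 : t ≠ 1 := by intro h; rw [h] at hspos; norm_num at hspos
  have hnem1 : t ≠ -1 := by intro h; rw [h] at hspos; norm_num at hspos
  have h1 : HasDerivAt (fun q : ℝ => Real.tanh (q / 2)) ((1 - t ^ 2) * (1 / 2)) p := by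
    exact (tanh_hasDerivAt (p / 2)).comp p ((hasDerivAt_id p).div_const 2)
  have h2 := Real.hasDerivAt_arcsin hnem1 hne1
  have hz : HasDerivAt auxLoss (1 / Real.sqrt (1 - t ^ 2) * ((1 - t ^ 2) * (1 / 2))) p :=
    h2.comp p h1
  rw [hz.deriv]
  have hs : Real.sqrt (1 - t ^ 2) ^ 2 = 1 - t ^ 2 := Real.sq_sqrt (le_of_lt hspos)
  have hinv : (1 / Real.sqrt (1 - t ^ 2)) ^ 2 = 1 / (1 - t ^ 2) := by
    rw [div_pow, one_pow, hs]
  rw [mul_pow, hinv]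
  field_simp
  ring

/-- With `v(p) = z'(p)` the derivative of the auxiliary loss, one has
`(v(p))² = σ(p)(1-σ(p)) = d²ℓ/dp²(p,y)` for all real `p` and `y`. -/
theorem auxLoss_deriv_sq_eq_sigmoid_and_snd_deriv_bce (p y : ℝ) :
    (deriv auxLoss p) ^ 2 = logisticSigmoid p * (1 - logisticSigmoid p) ∧
    (deriv auxLoss p) ^ 2 = deriv (deriv (fun q : ℝ => bceLoss q y)) p := by
  have key : (deriv auxLoss p) ^ 2 = logisticSigmoid p * (1 - logisticSigmoid p) := by
    rw [auxLoss_deriv_sq, sigmoid_eq]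
    have ha : Real.exp (p / 2) > 0 := Real.exp_pos _
    have hane : Real.exp (p / 2) ≠ 0 := ne_of_gt ha
    have hexp : Real.exp (-p) = (Real.exp (p / 2) * Real.exp (p / 2))⁻¹ := by
      rw [← Real.exp_add, Real.exp_neg]; norm_num
    have htanh : Real.tanh (p / 2)
        = (Real.exp (p / 2) - (Real.exp (p / 2))⁻¹)
          / (Real.exp (p / 2) + (Real.exp (p / 2))⁻¹) := by
      rw [Real.tanh_eq_sinh_div_cosh, Real.sinh_eq, Real.cosh_eq, Real.exp_neg]
      field_simp
    set a := Real.exp (p / 2)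
    have hden : a + a⁻¹ ≠ 0 := by positivity
    rw [htanh, hexp]
    have h1 : (0:ℝ) < 1 + (a * a)⁻¹ := by positivity
    field_simp
    ring
  refine ⟨key, ?_⟩
  rw [key, bce_snd_deriv, sigmoid_eq]
end

section
/- Let ε > 0, β₁ ∈ [0,1), β₂ ∈ (β₁,1), and let (a_k) be a sequence of real numbers. For each k ∈ ℕ define b_k = Σ_{j=1}^k β₂^{k-j} a_j² and c_k = Σ_{j=1}^k β₁^{k-j} a_j. Then for any k ∈ ℕ, Σ_{j=1}^k c_j²/(ε + b_j) ≤ (1/((1-β₁)(1-β₁/β₂))) · ( log(1 + b_k/ε) - k·log(β₂) ). -/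
open Finset

lemma geom_aux {r : ℝ} (h0 : 0 ≤ r) (h1 : r < 1) (n : ℕ) :
    ∑ i ∈ range n, r ^ i ≤ 1 / (1 - r) := by
  rw [geom_sum_eq h1.ne n]
  have h2 : (0:ℝ) < 1 - r := by linarith
  have h3 : (r ^ n - 1) / (r - 1) = (1 - r ^ n) / (1 - r) := by
    rw [← neg_div_neg_eq]; ring_nf
  have h4 : r ^ n ≥ 0 := pow_nonneg h0 n
  rw [h3]
  gcongr
  linarith

lemma reindex1 (r : ℝ) (j : ℕ) :
    ∑ l ∈ Icc 1 j, r ^ (j - l) = ∑ i ∈ range j, r ^ i := by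
  induction j with
  | zero => simp
  | succ n ih =>
    rw [Finset.sum_Icc_succ_top (by omega), geom_sum_succ]
    have : ∀ l ∈ Icc 1 n, r ^ (n + 1 - l) = r * r ^ (n - l) := by
      intro l hl
      simp only [mem_Icc] at hl
      rw [show n + 1 - l = (n - l) + 1 by omega, pow_succ']
    rw [Finset.sum_congr rfl this, ← Finset.mul_sum, ih]
    simp

lemma reindex2 (r : ℝ) (l k : ℕ) :
    ∑ j ∈ Icc l k, r ^ (j - l) = ∑ i ∈ range (k + 1 - l), r ^ i := by
  induction k with
  | zero =>
    rcases Nat.eq_zero_or_pos l with h | h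
    · subst h; simp
    · rw [Icc_eq_empty (by omega), show 0 + 1 - l = 0 by omega]; simp
  | succ n ih =>
    rcases le_or_gt l (n+1) with h | h
    · rw [Finset.sum_Icc_succ_top h, ih, show n + 1 + 1 - l = (n + 1 - l) + 1 by omega,
        Finset.sum_range_succ]
    · rw [Icc_eq_empty (by omega), show n + 1 + 1 - l = 0 by omega]; simp

/-- For `0 ≤ β₁ < β₂ < 1`, `ε > 0` and any real sequence `(aₖ)`, with
`bₖ = ∑_{j=1}^k β₂^{k-j} aⱼ²` and `cₖ = ∑_{j=1}^k β₁^{k-j} aⱼ`, one has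
`∑_{j=1}^k cⱼ²/(ε + bⱼ) ≤ (1/((1-β₁)(1-β₁/β₂))) (log(1 + bₖ/ε) - k log β₂)`. -/
theorem sum_sq_weighted_div_le_log (ε β₁ β₂ : ℝ) (hε : 0 < ε)
    (hβ₁ : β₁ ∈ Set.Ico (0 : ℝ) 1) (hβ₂ : β₂ ∈ Set.Ioo β₁ 1)
    (a : ℕ → ℝ) (k : ℕ) :
    ∑ j ∈ Finset.Icc 1 k,
        (∑ l ∈ Finset.Icc 1 j, β₁ ^ (j - l) * a l) ^ 2 /
          (ε + ∑ l ∈ Finset.Icc 1 j, β₂ ^ (j - l) * (a l) ^ 2)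
      ≤ (1 / ((1 - β₁) * (1 - β₁ / β₂))) *
          (Real.log (1 + (∑ l ∈ Finset.Icc 1 k, β₂ ^ (k - l) * (a l) ^ 2) / ε)
            - k * Real.log β₂) := by
  obtain ⟨hβ₁0, hβ₁1⟩ := hβ₁
  obtain ⟨h12, hβ₂1⟩ := hβ₂
  have hβ₂0 : (0:ℝ) < β₂ := lt_of_le_of_lt hβ₁0 h12
  have hr0 : (0:ℝ) ≤ β₁ / β₂ := div_nonneg hβ₁0 hβ₂0.le
  have hr1 : β₁ / β₂ < 1 := (div_lt_one hβ₂0).mpr h12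
  have hc1 : (0:ℝ) ≤ 1 / (1 - β₁) := div_nonneg zero_le_one (by linarith)
  have hc2 : (0:ℝ) ≤ 1 / (1 - β₁ / β₂) := div_nonneg zero_le_one (by linarith)
  set b : ℕ → ℝ := fun j => ε + ∑ l ∈ Finset.Icc 1 j, β₂ ^ (j - l) * (a l) ^ 2 with hbdef
  have hbj : ∀ j, b j = ε + ∑ l ∈ Finset.Icc 1 j, β₂ ^ (j - l) * (a l) ^ 2 := fun j => rfl
  have hbpos : ∀ j, 0 < b j := by
    intro j
    have : (0:ℝ) ≤ ∑ l ∈ Finset.Icc 1 j, β₂ ^ (j - l) * (a l) ^ 2 :=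
      Finset.sum_nonneg fun l _ => by positivity
    rw [hbj]; linarith
  have hb0 : b 0 = ε := by rw [hbj]; simp
  have hrec : ∀ j, b (j + 1) = β₂ * b j + a (j + 1) ^ 2 + (1 - β₂) * ε := by
    intro j
    rw [hbj, hbj, Finset.sum_Icc_succ_top (by omega)]
    have h1 : ∀ l ∈ Icc 1 j, β₂ ^ (j + 1 - l) * (a l) ^ 2 = β₂ * (β₂ ^ (j - l) * (a l) ^ 2) := by
      intro l hl
      simp only [mem_Icc] at hl
      rw [show j + 1 - l = (j - l) + 1 by omega, pow_succ']
      ring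
    rw [Finset.sum_congr rfl h1, ← Finset.mul_sum]
    simp
    ring
  have hgrow : ∀ l j, l ≤ j → β₂ ^ (j - l) * b l ≤ b j := by
    intro l j hlj
    induction j, hlj using Nat.le_induction with
    | base => simp
    | succ n hn ih =>
      have h1 : β₂ ^ (n + 1 - l) * b l = β₂ * (β₂ ^ (n - l) * b l) := by
        rw [show n + 1 - l = (n - l) + 1 by omega, pow_succ']; ring
      have h2 : a (n + 1) ^ 2 ≥ 0 := sq_nonneg _
      have h3 : (1 - β₂) * ε ≥ 0 := by nlinarith
      calc β₂ ^ (n + 1 - l) * b l = β₂ * (β₂ ^ (n - l) * b l) := h1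
        _ ≤ β₂ * b n := by nlinarith
        _ ≤ b (n + 1) := by rw [hrec]; nlinarith
  -- Cauchy-Schwarz step
  have cauchy : ∀ j, (∑ l ∈ Finset.Icc 1 j, β₁ ^ (j - l) * a l) ^ 2
      ≤ (1 / (1 - β₁)) * ∑ l ∈ Finset.Icc 1 j, β₁ ^ (j - l) * (a l) ^ 2 := by
    intro j
    have h := Finset.sum_mul_sq_le_sq_mul_sq (Icc 1 j)
      (fun l => Real.sqrt (β₁ ^ (j - l))) (fun l => Real.sqrt (β₁ ^ (j - l)) * a l)
    have hp : ∀ l, (0:ℝ) ≤ β₁ ^ (j - l) := fun l => pow_nonneg hβ₁0 _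
    have e1 : ∀ l ∈ Icc 1 j, Real.sqrt (β₁ ^ (j - l)) * (Real.sqrt (β₁ ^ (j - l)) * a l)
        = β₁ ^ (j - l) * a l := by
      intro l _
      rw [← mul_assoc, Real.mul_self_sqrt (hp l)]
    have e2 : ∀ l ∈ Icc 1 j, (Real.sqrt (β₁ ^ (j - l))) ^ 2 = β₁ ^ (j - l) := by
      intro l _; exact Real.sq_sqrt (hp l)
    have e3 : ∀ l ∈ Icc 1 j, (Real.sqrt (β₁ ^ (j - l)) * a l) ^ 2
        = β₁ ^ (j - l) * (a l) ^ 2 := by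
      intro l _
      rw [mul_pow, Real.sq_sqrt (hp l)]
    rw [Finset.sum_congr rfl e1, Finset.sum_congr rfl e2, Finset.sum_congr rfl e3] at h
    have hg : ∑ l ∈ Icc 1 j, β₁ ^ (j - l) ≤ 1 / (1 - β₁) := by
      rw [reindex1]; exact geom_aux hβ₁0 hβ₁1 _
    have hs : (0:ℝ) ≤ ∑ l ∈ Icc 1 j, β₁ ^ (j - l) * (a l) ^ 2 :=
      Finset.sum_nonneg fun l _ => by positivity
    calc (∑ l ∈ Finset.Icc 1 j, β₁ ^ (j - l) * a l) ^ 2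
        ≤ (∑ l ∈ Icc 1 j, β₁ ^ (j - l)) * ∑ l ∈ Icc 1 j, β₁ ^ (j - l) * (a l) ^ 2 := h
      _ ≤ (1 / (1 - β₁)) * ∑ l ∈ Icc 1 j, β₁ ^ (j - l) * (a l) ^ 2 :=
          mul_le_mul_of_nonneg_right hg hs
  -- Step A
  have stepA : ∀ j, (∑ l ∈ Finset.Icc 1 j, β₁ ^ (j - l) * a l) ^ 2 / b j
      ≤ (1 / (1 - β₁)) * ∑ l ∈ Finset.Icc 1 j, (β₁ / β₂) ^ (j - l) * ((a l) ^ 2 / b l) := by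
    intro j
    have h1 : (∑ l ∈ Finset.Icc 1 j, β₁ ^ (j - l) * a l) ^ 2 / b j
        ≤ ((1 / (1 - β₁)) * ∑ l ∈ Finset.Icc 1 j, β₁ ^ (j - l) * (a l) ^ 2) / b j :=
      div_le_div_of_nonneg_right (cauchy j) (hbpos j).le
    have h2 : ((1 / (1 - β₁)) * ∑ l ∈ Finset.Icc 1 j, β₁ ^ (j - l) * (a l) ^ 2) / b j
        = (1 / (1 - β₁)) * ∑ l ∈ Finset.Icc 1 j, (β₁ ^ (j - l) * (a l) ^ 2 / b j) := by
      rw [mul_div_assoc, Finset.sum_div]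
    have h3 : ∀ l ∈ Icc 1 j, β₁ ^ (j - l) * (a l) ^ 2 / b j
        ≤ (β₁ / β₂) ^ (j - l) * ((a l) ^ 2 / b l) := by
      intro l hl
      simp only [mem_Icc] at hl
      have hdp : 0 < β₂ ^ (j - l) * b l := mul_pos (pow_pos hβ₂0 _) (hbpos l)
      have h4 : β₁ ^ (j - l) * (a l) ^ 2 / b j
          ≤ β₁ ^ (j - l) * (a l) ^ 2 / (β₂ ^ (j - l) * b l) :=
        div_le_div_of_nonneg_left (by positivity) hdp (hgrow l j hl.2)
      have h5 : β₁ ^ (j - l) * (a l) ^ 2 / (β₂ ^ (j - l) * b l)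
          = (β₁ / β₂) ^ (j - l) * ((a l) ^ 2 / b l) := by
        rw [div_pow, div_mul_div_comm]
      rw [← h5]; exact h4
    calc (∑ l ∈ Finset.Icc 1 j, β₁ ^ (j - l) * a l) ^ 2 / b j
        ≤ ((1 / (1 - β₁)) * ∑ l ∈ Finset.Icc 1 j, β₁ ^ (j - l) * (a l) ^ 2) / b j := h1
      _ = (1 / (1 - β₁)) * ∑ l ∈ Finset.Icc 1 j, (β₁ ^ (j - l) * (a l) ^ 2 / b j) := h2
      _ ≤ (1 / (1 - β₁)) * ∑ l ∈ Finset.Icc 1 j, (β₁ / β₂) ^ (j - l) * ((a l) ^ 2 / b l) :=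
          mul_le_mul_of_nonneg_left (Finset.sum_le_sum h3) hc1
  -- swap the double sum
  have hswap : ∑ j ∈ Icc 1 k, ∑ l ∈ Icc 1 j, (β₁ / β₂) ^ (j - l) * ((a l) ^ 2 / b l)
      = ∑ l ∈ Icc 1 k, (∑ j ∈ Icc l k, (β₁ / β₂) ^ (j - l)) * ((a l) ^ 2 / b l) := by
    have hfil : ∀ j ∈ Icc 1 k, (Icc 1 j : Finset ℕ) = (Icc 1 k).filter (fun l => l ≤ j) := by
      intro j hj
      simp only [mem_Icc] at hj
      ext l
      simp only [mem_Icc, mem_filter]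
      omega
    calc ∑ j ∈ Icc 1 k, ∑ l ∈ Icc 1 j, (β₁ / β₂) ^ (j - l) * ((a l) ^ 2 / b l)
        = ∑ j ∈ Icc 1 k, ∑ l ∈ Icc 1 k,
            if l ≤ j then (β₁ / β₂) ^ (j - l) * ((a l) ^ 2 / b l) else 0 := by
          refine Finset.sum_congr rfl fun j hj => ?_
          rw [hfil j hj, Finset.sum_filter]
      _ = ∑ l ∈ Icc 1 k, ∑ j ∈ Icc 1 k,
            if l ≤ j then (β₁ / β₂) ^ (j - l) * ((a l) ^ 2 / b l) else 0 := Finset.sum_comm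
      _ = ∑ l ∈ Icc 1 k, ∑ j ∈ Icc l k, (β₁ / β₂) ^ (j - l) * ((a l) ^ 2 / b l) := by
          refine Finset.sum_congr rfl fun l hl => ?_
          simp only [mem_Icc] at hl
          rw [← Finset.sum_filter]
          congr 1
          ext j
          simp only [mem_Icc, mem_filter]
          omega
      _ = ∑ l ∈ Icc 1 k, (∑ j ∈ Icc l k, (β₁ / β₂) ^ (j - l)) * ((a l) ^ 2 / b l) := by
          refine Finset.sum_congr rfl fun l _ => ?_
          rw [Finset.sum_mul]
  have hgeom2 : ∀ l, ∑ j ∈ Icc l k, (β₁ / β₂) ^ (j - l) ≤ 1 / (1 - β₁ / β₂) := by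
    intro l
    rw [reindex2]
    exact geom_aux hr0 hr1 _
  -- per-step log bound
  have hstep : ∀ m : ℕ, a (m + 1) ^ 2 / b (m + 1)
      ≤ Real.log (b (m + 1)) - Real.log (b m) - Real.log β₂ := by
    intro m
    have hbm := hbpos m
    have hbm1 := hbpos (m + 1)
    have hsub : b (m + 1) - a (m + 1) ^ 2 = β₂ * b m + (1 - β₂) * ε := by
      rw [hrec]; ring
    have hsubpos : 0 < b (m + 1) - a (m + 1) ^ 2 := by
      rw [hsub]; nlinarith
    have ht : (0:ℝ) < (b (m + 1) - a (m + 1) ^ 2) / b (m + 1) := div_pos hsubpos hbm1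
    have hlog1 : Real.log ((b (m + 1) - a (m + 1) ^ 2) / b (m + 1))
        ≤ (b (m + 1) - a (m + 1) ^ 2) / b (m + 1) - 1 := Real.log_le_sub_one_of_pos ht
    have heq1 : (b (m + 1) - a (m + 1) ^ 2) / b (m + 1) - 1 = -(a (m + 1) ^ 2 / b (m + 1)) := by
      field_simp
      ring
    have heq2 : Real.log ((b (m + 1) - a (m + 1) ^ 2) / b (m + 1))
        = Real.log (b (m + 1) - a (m + 1) ^ 2) - Real.log (b (m + 1)) :=
      Real.log_div hsubpos.ne' hbm1.ne'
    have hmono : Real.log (β₂ * b m) ≤ Real.log (b (m + 1) - a (m + 1) ^ 2) := by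
      apply Real.log_le_log (mul_pos hβ₂0 hbm)
      rw [hsub]; nlinarith
    have hlogmul : Real.log (β₂ * b m) = Real.log β₂ + Real.log (b m) :=
      Real.log_mul hβ₂0.ne' hbm.ne'
    rw [heq2, heq1] at hlog1
    linarith
  -- telescoping
  have hreidx : ∑ l ∈ Icc 1 k, (a l) ^ 2 / b l = ∑ i ∈ range k, a (i + 1) ^ 2 / b (i + 1) := by
    rw [← Finset.Ico_add_one_right_eq_Icc, Finset.sum_Ico_eq_sum_range]
    refine Finset.sum_congr (by norm_num) fun i _ => by rw [Nat.add_comm]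
  have hlogsum : ∑ l ∈ Icc 1 k, (a l) ^ 2 / b l
      ≤ Real.log (1 + (∑ l ∈ Finset.Icc 1 k, β₂ ^ (k - l) * (a l) ^ 2) / ε)
          - k * Real.log β₂ := by
    have h1 : ∑ l ∈ Icc 1 k, (a l) ^ 2 / b l
        ≤ ∑ i ∈ range k, (Real.log (b (i + 1)) - Real.log (b i) - Real.log β₂) := by
      rw [hreidx]
      exact Finset.sum_le_sum fun i _ => hstep i
    have h2 : ∑ i ∈ range k, (Real.log (b (i + 1)) - Real.log (b i) - Real.log β₂)
        = (Real.log (b k) - Real.log (b 0)) - k * Real.log β₂ := by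
      rw [Finset.sum_sub_distrib, Finset.sum_range_sub (fun i => Real.log (b i))]
      simp [mul_comm]
    have h3 : Real.log (b k) - Real.log (b 0)
        = Real.log (1 + (∑ l ∈ Finset.Icc 1 k, β₂ ^ (k - l) * (a l) ^ 2) / ε) := by
      rw [hb0, ← Real.log_div (hbpos k).ne' hε.ne']
      congr 1
      rw [hbj]
      field_simp
    linarith
  -- assemble
  have hXnn : ∀ l, (0:ℝ) ≤ (a l) ^ 2 / b l := fun l => div_nonneg (sq_nonneg _) (hbpos l).le
  calc ∑ j ∈ Finset.Icc 1 k,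
        (∑ l ∈ Finset.Icc 1 j, β₁ ^ (j - l) * a l) ^ 2 /
          (ε + ∑ l ∈ Finset.Icc 1 j, β₂ ^ (j - l) * (a l) ^ 2)
      = ∑ j ∈ Finset.Icc 1 k,
        (∑ l ∈ Finset.Icc 1 j, β₁ ^ (j - l) * a l) ^ 2 / b j := by
        refine Finset.sum_congr rfl fun j _ => by rw [hbj]
    _ ≤ ∑ j ∈ Icc 1 k,
        (1 / (1 - β₁)) * ∑ l ∈ Icc 1 j, (β₁ / β₂) ^ (j - l) * ((a l) ^ 2 / b l) :=
        Finset.sum_le_sum fun j _ => stepA j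
    _ = (1 / (1 - β₁)) * ∑ j ∈ Icc 1 k, ∑ l ∈ Icc 1 j,
          (β₁ / β₂) ^ (j - l) * ((a l) ^ 2 / b l) := by rw [Finset.mul_sum]
    _ = (1 / (1 - β₁)) * ∑ l ∈ Icc 1 k,
          (∑ j ∈ Icc l k, (β₁ / β₂) ^ (j - l)) * ((a l) ^ 2 / b l) := by rw [hswap]
    _ ≤ (1 / (1 - β₁)) * ∑ l ∈ Icc 1 k, (1 / (1 - β₁ / β₂)) * ((a l) ^ 2 / b l) := by
        refine mul_le_mul_of_nonneg_left (Finset.sum_le_sum fun l _ => ?_) hc1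
        exact mul_le_mul_of_nonneg_right (hgeom2 l) (hXnn l)
    _ = (1 / (1 - β₁)) * ((1 / (1 - β₁ / β₂)) * ∑ l ∈ Icc 1 k, (a l) ^ 2 / b l) := by
        rw [← Finset.mul_sum]
    _ ≤ (1 / (1 - β₁)) * ((1 / (1 - β₁ / β₂)) *
          (Real.log (1 + (∑ l ∈ Finset.Icc 1 k, β₂ ^ (k - l) * (a l) ^ 2) / ε)
            - k * Real.log β₂)) := by
        apply mul_le_mul_of_nonneg_left (mul_le_mul_of_nonneg_left hlogsum hc2) hc1
    _ = (1 / ((1 - β₁) * (1 - β₁ / β₂))) *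
          (Real.log (1 + (∑ l ∈ Finset.Icc 1 k, β₂ ^ (k - l) * (a l) ^ 2) / ε)
            - k * Real.log β₂) := by
        rw [← mul_assoc, div_mul_div_comm, one_mul]
end

section
/- Let ε > 0, β₂ ∈ (0,1), and let (a_k) be a sequence of real numbers. For each k ∈ ℕ define b_k = Σ_{j=1}^k β₂^{k-j} a_j². Then for any k ∈ ℕ, Σ_{j=1}^k a_j²/(ε + b_j) ≤ log(1 + b_k/ε) - k·log(β₂). -/
/-- For `β₂ ∈ (0,1)`, `ε > 0` and any real sequence `(aₖ)`, with
`bₖ = ∑_{j=1}^k β₂^{k-j} aⱼ²`, one has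
`∑_{j=1}^k aⱼ²/(ε + bⱼ) ≤ log(1 + bₖ/ε) - k log β₂`. -/
theorem sum_sq_div_weighted_le_log (ε β₂ : ℝ) (hε : 0 < ε)
    (hβ₂ : β₂ ∈ Set.Ioo (0 : ℝ) 1) (a : ℕ → ℝ) (k : ℕ) :
    ∑ j ∈ Finset.Icc 1 k,
        (a j) ^ 2 / (ε + ∑ l ∈ Finset.Icc 1 j, β₂ ^ (j - l) * (a l) ^ 2)
      ≤ Real.log (1 + (∑ l ∈ Finset.Icc 1 k, β₂ ^ (k - l) * (a l) ^ 2) / ε)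
          - k * Real.log β₂ := by
  obtain ⟨hβ0, hβ1⟩ := hβ₂
  set b : ℕ → ℝ := fun j => ∑ l ∈ Finset.Icc 1 j, β₂ ^ (j - l) * (a l) ^ 2 with hb
  have hbnn : ∀ j, 0 ≤ b j := fun j =>
    Finset.sum_nonneg (fun l _ => by positivity)
  have hpos : ∀ j, 0 < ε + b j := fun j => by linarith [hbnn j]
  have hrec : ∀ j, b (j + 1) = β₂ * b j + a (j + 1) ^ 2 := by
    intro j
    simp only [hb]
    rw [Finset.sum_Icc_succ_top (by omega : 1 ≤ j + 1), Finset.mul_sum]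
    congr 1
    · apply Finset.sum_congr rfl
      intro l hl
      have hl' : l ≤ j := (Finset.mem_Icc.mp hl).2
      rw [← mul_assoc, ← pow_succ']
      congr 2
      omega
    · simp
  have hlog : ∀ j, Real.log (1 + b j / ε) = Real.log (ε + b j) - Real.log ε := by
    intro j
    rw [show 1 + b j / ε = (ε + b j) / ε by field_simp,
      Real.log_div (ne_of_gt (hpos j)) (ne_of_gt hε)]
  induction k with
  | zero => simp
  | succ n ih =>
    rw [Finset.sum_Icc_succ_top (by omega : 1 ≤ n + 1)]
    have key : a (n + 1) ^ 2 / (ε + b (n + 1)) ≤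
        Real.log (1 + b (n + 1) / ε) - Real.log (1 + b n / ε) - Real.log β₂ := by
      rw [hlog, hlog]
      have step1 : Real.log β₂ + Real.log (ε + b n) ≤ Real.log (ε + β₂ * b n) := by
        rw [← Real.log_mul (ne_of_gt hβ0) (ne_of_gt (hpos n))]
        apply Real.log_le_log (by positivity)
        nlinarith [hbnn n]
      have hpos' : 0 < ε + β₂ * b n := by nlinarith [hbnn n]
      have step2 : Real.log ((ε + β₂ * b n) / (ε + b (n + 1))) ≤
          (ε + β₂ * b n) / (ε + b (n + 1)) - 1 :=
        Real.log_le_sub_one_of_pos (by positivity)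
      rw [Real.log_div (ne_of_gt hpos') (ne_of_gt (hpos (n + 1)))] at step2
      have heq : (ε + β₂ * b n) / (ε + b (n + 1)) - 1 =
          -(a (n + 1) ^ 2 / (ε + b (n + 1))) := by
        have hd : ε + (β₂ * b n + a (n + 1) ^ 2) ≠ 0 := by
          rw [← hrec n]; exact ne_of_gt (hpos (n + 1))
        rw [hrec n]
        field_simp
        ring
      rw [heq] at step2
      linarith
    have hcast : ((n : ℕ) + 1 : ℕ) * Real.log β₂ = n * Real.log β₂ + Real.log β₂ := by
      push_cast; ring
    push_cast
    push_cast at ih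
    linarith
end

section
/- For any k ∈ ℕ and any β ∈ (0,1), Σ_{j=0}^{k-1} β^j · √(j+1) ≤ 2/(1-β)^{3/2}. -/
/-- For any `k ∈ ℕ` and `β ∈ (0,1)`, `∑_{j=0}^{k-1} βʲ √(j+1) ≤ 2/(1-β)^{3/2}`. -/
theorem sum_geom_sqrt_succ_le (k : ℕ) (β : ℝ) (hβ : β ∈ Set.Ioo (0 : ℝ) 1) :
    ∑ j ∈ Finset.range k, β ^ j * Real.sqrt (j + 1)
      ≤ 2 / (1 - β) ^ ((3 : ℝ) / 2) := by
  obtain ⟨hβ0, hβ1⟩ := hβ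
  have hβ0' : (0:ℝ) ≤ β := le_of_lt hβ0
  have h1β : (0:ℝ) < 1 - β := by linarith
  have hnorm : ‖β‖ < 1 := by rw [Real.norm_eq_abs, abs_of_nonneg hβ0']; exact hβ1
  set S := ∑ j ∈ Finset.range k, β ^ j * Real.sqrt (j + 1) with hSdef
  have hS0 : 0 ≤ S := Finset.sum_nonneg fun j _ =>
    mul_nonneg (pow_nonneg hβ0' j) (Real.sqrt_nonneg _)
  -- Cauchy-Schwarz
  have hcs : S ^ 2 ≤ (∑ j ∈ Finset.range k, β ^ j) *
      ∑ j ∈ Finset.range k, β ^ j * ((j : ℝ) + 1) := by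
    have := Finset.sum_mul_sq_le_sq_mul_sq (Finset.range k)
      (fun j => Real.sqrt (β ^ j)) (fun j => Real.sqrt (β ^ j * ((j : ℝ) + 1)))
    have e1 : ∀ j ∈ Finset.range k,
        Real.sqrt (β ^ j) * Real.sqrt (β ^ j * ((j : ℝ) + 1)) = β ^ j * Real.sqrt (j + 1) := by
      intro j _
      rw [← Real.sqrt_mul (pow_nonneg hβ0' j), ← mul_assoc, ← pow_two,
        Real.sqrt_mul (sq_nonneg _), Real.sqrt_sq (pow_nonneg hβ0' j)]
    have e2 : ∀ j ∈ Finset.range k, Real.sqrt (β ^ j) ^ 2 = β ^ j := by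
      intro j _; exact Real.sq_sqrt (pow_nonneg hβ0' j)
    have e3 : ∀ j ∈ Finset.range k,
        Real.sqrt (β ^ j * ((j : ℝ) + 1)) ^ 2 = β ^ j * ((j : ℝ) + 1) := by
      intro j _
      exact Real.sq_sqrt (mul_nonneg (pow_nonneg hβ0' j) (by positivity))
    rwa [Finset.sum_congr rfl e1, Finset.sum_congr rfl e2, Finset.sum_congr rfl e3] at this
  have hA : ∑ j ∈ Finset.range k, β ^ j ≤ 1 / (1 - β) := by
    have := Summable.sum_le_tsum (Finset.range k) (fun j _ => pow_nonneg hβ0' j)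
      (summable_geometric_of_lt_one hβ0' hβ1)
    rwa [tsum_geometric_of_lt_one hβ0' hβ1, inv_eq_one_div] at this
  have hsum1 : Summable (fun n : ℕ => (n : ℝ) * β ^ n) := by
    simpa using summable_pow_mul_geometric_of_norm_lt_one 1 hnorm
  have hsum0 : Summable (fun n : ℕ => β ^ n) := summable_geometric_of_lt_one hβ0' hβ1
  have hsum : Summable (fun n : ℕ => β ^ n * ((n : ℝ) + 1)) := by
    have := hsum1.add hsum0
    apply this.congr
    intro n; ring
  have hB : ∑ j ∈ Finset.range k, β ^ j * ((j : ℝ) + 1) ≤ 1 / (1 - β) ^ 2 := by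
    have hle := Summable.sum_le_tsum (Finset.range k)
      (fun j _ => mul_nonneg (pow_nonneg hβ0' j) (by positivity)) hsum
    have htsum : ∑' n : ℕ, β ^ n * ((n : ℝ) + 1) = 1 / (1 - β) ^ 2 := by
      have e : ∀ n : ℕ, β ^ n * ((n : ℝ) + 1) = (n : ℝ) * β ^ n + β ^ n := by
        intro n; ring
      rw [tsum_congr e, Summable.tsum_add hsum1 hsum0,
        tsum_coe_mul_geometric_of_norm_lt_one hnorm, tsum_geometric_of_lt_one hβ0' hβ1]
      field_simp
      ring
    rw [htsum] at hle
    exact hle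
  have hsq : S ^ 2 ≤ 1 / (1 - β) ^ 3 := by
    calc S ^ 2 ≤ (∑ j ∈ Finset.range k, β ^ j) *
        ∑ j ∈ Finset.range k, β ^ j * ((j : ℝ) + 1) := hcs
      _ ≤ (1 / (1 - β)) * (1 / (1 - β) ^ 2) := by
          apply mul_le_mul hA hB
          · exact Finset.sum_nonneg fun j _ =>
              mul_nonneg (pow_nonneg hβ0' j) (by positivity)
          · positivity
      _ = 1 / (1 - β) ^ 3 := by field_simp
  have hrpow : (1 - β) ^ ((3 : ℝ) / 2) = Real.sqrt ((1 - β) ^ 3) := by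
    rw [Real.sqrt_eq_rpow, ← Real.rpow_natCast (1 - β) 3, ← Real.rpow_mul h1β.le]
    norm_num
  have hS_le : S ≤ Real.sqrt (1 / (1 - β) ^ 3) := by
    rw [show (1:ℝ) / (1 - β) ^ 3 = ((1:ℝ)/(1-β)^3) from rfl]
    have := Real.sqrt_le_sqrt hsq
    rwa [Real.sqrt_sq hS0] at this
  have hx : 0 < (1 - β) ^ ((3 : ℝ) / 2) := Real.rpow_pos_of_pos h1β _
  calc S ≤ Real.sqrt (1 / (1 - β) ^ 3) := hS_le
    _ = 1 / (1 - β) ^ ((3 : ℝ) / 2) := by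
        rw [one_div, Real.sqrt_inv, hrpow, one_div]
    _ ≤ 2 / (1 - β) ^ ((3 : ℝ) / 2) := by
        gcongr
        norm_num
end

section
/- For any k ∈ ℕ and any β ∈ (0,1), Σ_{j=0}^{k-1} β^j · √j · (j+1) ≤ 4β/(1-β)^{5/2}. -/
/-- For any `k ∈ ℕ` and `β ∈ (0,1)`, `∑_{j=0}^{k-1} βʲ √j (j+1) ≤ 4β/(1-β)^{5/2}`. -/
theorem sum_geom_sqrt_mul_succ_le (k : ℕ) (β : ℝ) (hβ : β ∈ Set.Ioo (0 : ℝ) 1) :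
    ∑ j ∈ Finset.range k, β ^ j * Real.sqrt j * (j + 1)
      ≤ 4 * β / (1 - β) ^ ((5 : ℝ) / 2) := by
  obtain ⟨hβ0, hβ1⟩ := hβ
  have h1 : (0:ℝ) < 1 - β := by linarith
  set c := Real.sqrt (1 - β) with hc_def
  have hc : 0 < c := Real.sqrt_pos.mpr h1
  have hc2 : c ^ 2 = 1 - β := Real.sq_sqrt h1.le
  have hclt : c < 1 := by nlinarith
  have hβn : ‖β‖ < 1 := by rw [Real.norm_eq_abs, abs_of_pos hβ0]; exact hβ1
  -- series facts
  have hA : HasSum (fun n : ℕ => ((n:ℝ)+1)*((n:ℝ)+2) * β^n) (2 * (1/(1-β)^3)) := by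
    have h := (hasSum_choose_mul_geometric_of_norm_lt_one 2 hβn (𝕜 := ℝ)).mul_left 2
    have he : (fun n : ℕ => 2 * ((((n+2).choose 2 : ℕ) : ℝ) * β^n))
        = fun n : ℕ => ((n:ℝ)+1)*((n:ℝ)+2) * β^n := by
      funext n
      have hn : (n+2).choose 2 * 2 = (n+1)*(n+2) := by
        rw [Nat.choose_two_right]
        show (n+2)*(n+1)/2*2 = (n+1)*(n+2)
        rw [Nat.mul_comm (n+2) (n+1)]
        exact Nat.div_mul_cancel (Nat.even_mul_succ_self (n+1)).two_dvd
      have hcast := congrArg (Nat.cast : ℕ → ℝ) hn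
      push_cast at hcast
      rw [show ((n:ℝ)+1)*((n:ℝ)+2) = ((((n+2).choose 2 : ℕ)):ℝ)*2 from hcast.symm]
      ring
    rwa [he] at h
  have hB : HasSum (fun n : ℕ => ((n:ℝ)+2) * β^n) (1/(1-β)^2 + (1-β)⁻¹) := by
    have h1' := hasSum_choose_mul_geometric_of_norm_lt_one 1 hβn (𝕜 := ℝ)
    have h2' := hasSum_geometric_of_lt_one hβ0.le hβ1
    have h := h1'.add h2'
    have he : (fun n : ℕ => (((n+1).choose 1 : ℕ) : ℝ) * β^n + β^n)
        = fun n : ℕ => ((n:ℝ)+2) * β^n := by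
      funext n; simp [Nat.choose_one_right]; push_cast; ring
    rw [he] at h
    convert h using 1
  set S : ℝ := c/2 * (2 * (1/(1-β)^3)) + 1/(2*c) * (1/(1-β)^2 + (1-β)⁻¹) with hS_def
  have hF : HasSum (fun n : ℕ => β * (c/2 * (((n:ℝ)+1)*((n:ℝ)+2) * β^n)
      + 1/(2*c) * (((n:ℝ)+2) * β^n))) (β * S) :=
    ((hA.mul_left (c/2)).add (hB.mul_left (1/(2*c)))).mul_left β
  -- pointwise bound
  have hpt : ∀ i : ℕ, β ^ (i+1) * Real.sqrt ((i+1 : ℕ) : ℝ) * (((i+1 : ℕ) : ℝ) + 1)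
      ≤ β * (c/2 * (((i:ℝ)+1)*((i:ℝ)+2) * β^i) + 1/(2*c) * (((i:ℝ)+2) * β^i)) := by
    intro i
    push_cast
    set s := Real.sqrt ((i:ℝ)+1) with hs_def
    have hs0 : 0 ≤ s := Real.sqrt_nonneg _
    have hs2 : s^2 = (i:ℝ)+1 := Real.sq_sqrt (by positivity)
    have key : s ≤ (c*((i:ℝ)+1) + 1/c)/2 := by
      rw [le_div_iff₀ (by norm_num : (0:ℝ) < 2), ← mul_le_mul_iff_of_pos_right hc]
      have h2 : (c*((i:ℝ)+1) + 1/c) * c = c^2*((i:ℝ)+1) + 1 := by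
        field_simp
      rw [h2]
      nlinarith [sq_nonneg (c*s - 1)]
    have hls : β^(i+1) * s * ((i:ℝ)+1+1) = (β^(i+1)*((i:ℝ)+2)) * s := by ring
    have hrs : β * (c/2 * (((i:ℝ)+1)*((i:ℝ)+2) * β^i) + 1/(2*c) * (((i:ℝ)+2) * β^i))
        = (β^(i+1)*((i:ℝ)+2)) * ((c*((i:ℝ)+1) + 1/c)/2) := by ring
    rw [hls, hrs]
    exact mul_le_mul_of_nonneg_left key (by positivity)
  -- assemble
  have htnn : ∀ j : ℕ, 0 ≤ β ^ j * Real.sqrt j * ((j:ℝ) + 1) := by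
    intro j; positivity
  calc ∑ j ∈ Finset.range k, β ^ j * Real.sqrt j * ((j:ℝ) + 1)
      ≤ ∑ j ∈ Finset.range (k+1), β ^ j * Real.sqrt j * ((j:ℝ) + 1) := by
        apply Finset.sum_le_sum_of_subset_of_nonneg
          (Finset.range_subset_range.2 (Nat.le_succ k))
        intro i _ _; exact htnn i
    _ = (∑ i ∈ Finset.range k, β ^ (i+1) * Real.sqrt ((i+1 : ℕ) : ℝ) * (((i+1 : ℕ) : ℝ) + 1))
        + β ^ 0 * Real.sqrt ((0:ℕ) : ℝ) * (((0:ℕ) : ℝ) + 1) :=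
        Finset.sum_range_succ' _ k
    _ = ∑ i ∈ Finset.range k, β ^ (i+1) * Real.sqrt ((i+1 : ℕ) : ℝ) * (((i+1 : ℕ) : ℝ) + 1) := by
        simp
    _ ≤ ∑ i ∈ Finset.range k, β * (c/2 * (((i:ℝ)+1)*((i:ℝ)+2) * β^i)
          + 1/(2*c) * (((i:ℝ)+2) * β^i)) := Finset.sum_le_sum fun i _ => hpt i
    _ ≤ β * S := sum_le_hasSum _ (fun i _ => by positivity) hF
    _ ≤ 4 * β / (1 - β) ^ ((5 : ℝ) / 2) := by
        have hr : (1-β) ^ ((5:ℝ)/2) = (1-β)^2 * c := by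
          rw [show (5:ℝ)/2 = 2 + 1/2 by norm_num, Real.rpow_add h1, hc_def,
            Real.sqrt_eq_rpow]
          norm_num
        rw [hr, hS_def, ← hc2, le_div_iff₀ (by positivity : (0:ℝ) < (c^2)^2*c)]
        have hcne : c ≠ 0 := hc.ne'
        have heq : (c/2 * (2 * (1/(c^2)^3)) + 1/(2*c) * (1/(c^2)^2 + (c^2)⁻¹)) * ((c^2)^2*c)
            = 3/2 + c^2/2 := by
          field_simp
          ring
        rw [mul_assoc, heq]
        nlinarith [hβ0, hclt, hc]
end

section
/- Let β ∈ (0,1), K ∈ ℕ, and let x₁,…,x_{K-1} (interpreted with indices x_{k-l} for 1 ≤ l ≤ k-1 ≤ K-1) be nonnegative real numbers. Then Σ_{k=1}^K Σ_{l=1}^{k-1} x_{k-l} · ( Σ_{j=l}^{k-1} β^j · √j ) ≤ (4β/(1-β)^{5/2}) · Σ_{k=1}^K x_k, where x_k for k ∈ {1,…,K} are the same nonnegative reals. -/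
open Finset

/-- For `β ∈ (0,1)` and nonnegative reals `x₁,…,x_K`,
`∑_{k=1}^K ∑_{l=1}^{k-1} x_{k-l} (∑_{j=l}^{k-1} βʲ √j) ≤ (4β/(1-β)^{5/2}) ∑_{k=1}^K x_k`. -/
theorem triple_sum_geom_sqrt_le (β : ℝ) (hβ : β ∈ Set.Ioo (0 : ℝ) 1) (K : ℕ)
    (x : ℕ → ℝ) (hx : ∀ k ∈ Finset.Icc 1 K, 0 ≤ x k) :
    ∑ k ∈ Finset.Icc 1 K, ∑ l ∈ Finset.Icc 1 (k - 1),
        x (k - l) * ∑ j ∈ Finset.Icc l (k - 1), β ^ j * Real.sqrt j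
      ≤ (4 * β / (1 - β) ^ ((5 : ℝ) / 2)) * ∑ k ∈ Finset.Icc 1 K, x k := by
  obtain ⟨hβ0, hβ1⟩ := hβ
  have h1β : 0 < 1 - β := by linarith
  set S := ∑ k ∈ Icc 1 K, x k with hSdef
  have hS : 0 ≤ S := Finset.sum_nonneg hx
  have hβnorm : ‖β‖ < 1 := by rw [Real.norm_eq_abs, abs_of_pos hβ0]; exact hβ1
  -- partial sum bounds
  have L1 : ∀ N : ℕ, ∑ j ∈ Icc 1 N, (j : ℝ) * β ^ j ≤ β / (1 - β) ^ 2 := by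
    intro N
    exact sum_le_hasSum _ (fun i _ => by positivity)
      (hasSum_coe_mul_geometric_of_norm_lt_one hβnorm)
  have L2 : ∀ N : ℕ, ∑ j ∈ Icc 1 N, (j : ℝ) ^ 2 * β ^ j ≤ 2 * β / (1 - β) ^ 3 := by
    intro N
    have hc : HasSum (fun n : ℕ => ((n + 2).choose 2 : ℝ) * β ^ n) (1 / (1 - β) ^ 3) :=
      hasSum_choose_mul_geometric_of_norm_lt_one 2 hβnorm
    have step1 : ∑ j ∈ Icc 1 N, (j : ℝ) ^ 2 * β ^ j
        ≤ ∑ j ∈ Icc 1 N, 2 * β * (((j - 1 + 2).choose 2 : ℝ) * β ^ (j - 1)) := by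
      apply Finset.sum_le_sum
      intro j hj
      rw [mem_Icc] at hj
      have hj' : j - 1 + 2 = j + 1 := by omega
      rw [hj']
      have hch : (((j + 1).choose 2 : ℕ) : ℝ) = ((j : ℝ) + 1) * j / 2 := by
        rw [Nat.cast_choose_two]; push_cast; ring
      have hpow : β ^ j = β * β ^ (j - 1) := by
        conv_lhs => rw [show j = 1 + (j - 1) by omega]
        rw [pow_add, pow_one]
      rw [hch, hpow]
      have hb : (0:ℝ) < β * β ^ (j - 1) := by positivity
      have hj1 : (1:ℝ) ≤ (j:ℝ) := by exact_mod_cast hj.1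
      nlinarith [hb, hj1]
    have step2 : ∑ j ∈ Icc 1 N, 2 * β * (((j - 1 + 2).choose 2 : ℝ) * β ^ (j - 1))
        = 2 * β * ∑ n ∈ range N, (((n + 2).choose 2 : ℝ) * β ^ n) := by
      rw [← Finset.mul_sum]
      congr 1
      rw [← Finset.Ico_add_one_right_eq_Icc, Finset.sum_Ico_eq_sum_range]
      simp only [Nat.succ_sub_one, Nat.add_sub_cancel, Nat.add_sub_cancel_left]
    have step3 : ∑ n ∈ range N, (((n + 2).choose 2 : ℝ) * β ^ n) ≤ 1 / (1 - β) ^ 3 :=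
      sum_le_hasSum _ (fun i _ => by positivity) hc
    calc ∑ j ∈ Icc 1 N, (j : ℝ) ^ 2 * β ^ j
        ≤ ∑ j ∈ Icc 1 N, 2 * β * (((j - 1 + 2).choose 2 : ℝ) * β ^ (j - 1)) := step1
      _ = 2 * β * ∑ n ∈ range N, (((n + 2).choose 2 : ℝ) * β ^ n) := step2
      _ ≤ 2 * β * (1 / (1 - β) ^ 3) :=
          mul_le_mul_of_nonneg_left step3 (by positivity)
      _ = 2 * β / (1 - β) ^ 3 := by ring
  -- the analytic bound on ∑ j^{3/2} β^j
  set u := Real.sqrt (1 - β) with hudef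
  have hu : 0 < u := Real.sqrt_pos.mpr h1β
  have hu2 : u ^ 2 = 1 - β := Real.sq_sqrt h1β.le
  have hrpow : (1 - β) ^ ((5 : ℝ) / 2) = u ^ 5 := by
    rw [hudef, Real.sqrt_eq_rpow, ← Real.rpow_natCast ((1 - β) ^ ((1:ℝ)/2)) 5,
      ← Real.rpow_mul h1β.le]
    norm_num
  have anal : ∑ j ∈ Icc 1 (K - 1), (j : ℝ) * (β ^ j * Real.sqrt j)
      ≤ 4 * β / (1 - β) ^ ((5 : ℝ) / 2) := by
    have ptwise : ∀ j ∈ Icc 1 (K - 1), (j : ℝ) * (β ^ j * Real.sqrt j)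
        ≤ u / 2 * ((j : ℝ) ^ 2 * β ^ j) + 1 / (2 * u) * ((j : ℝ) * β ^ j) := by
      intro j _
      have hjn : (0:ℝ) ≤ (j:ℝ) := j.cast_nonneg
      have hsj : Real.sqrt j ^ 2 = (j : ℝ) := Real.sq_sqrt hjn
      have h2u : (0:ℝ) < 2 * u := by positivity
      have hsq : Real.sqrt j ≤ u * j / 2 + 1 / (2 * u) := by
        have key : Real.sqrt j ≤ (u ^ 2 * j + 1) / (2 * u) := by
          rw [le_div_iff₀ h2u]
          nlinarith [sq_nonneg (u * Real.sqrt j - 1)]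
        calc Real.sqrt j ≤ (u ^ 2 * j + 1) / (2 * u) := key
          _ = u * j / 2 + 1 / (2 * u) := by field_simp
      have hjb : (0:ℝ) ≤ (j : ℝ) * β ^ j := by positivity
      calc (j : ℝ) * (β ^ j * Real.sqrt j) = ((j : ℝ) * β ^ j) * Real.sqrt j := by ring
        _ ≤ ((j : ℝ) * β ^ j) * (u * j / 2 + 1 / (2 * u)) :=
            mul_le_mul_of_nonneg_left hsq hjb
        _ = u / 2 * ((j : ℝ) ^ 2 * β ^ j) + 1 / (2 * u) * ((j : ℝ) * β ^ j) := by ring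
    calc ∑ j ∈ Icc 1 (K - 1), (j : ℝ) * (β ^ j * Real.sqrt j)
        ≤ ∑ j ∈ Icc 1 (K - 1),
            (u / 2 * ((j : ℝ) ^ 2 * β ^ j) + 1 / (2 * u) * ((j : ℝ) * β ^ j)) :=
          Finset.sum_le_sum ptwise
      _ = u / 2 * (∑ j ∈ Icc 1 (K - 1), (j : ℝ) ^ 2 * β ^ j)
            + 1 / (2 * u) * (∑ j ∈ Icc 1 (K - 1), (j : ℝ) * β ^ j) := by
          rw [Finset.sum_add_distrib, Finset.mul_sum, Finset.mul_sum]
      _ ≤ u / 2 * (2 * β / (1 - β) ^ 3) + 1 / (2 * u) * (β / (1 - β) ^ 2) := by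
          apply add_le_add
          · exact mul_le_mul_of_nonneg_left (L2 _) (by positivity)
          · exact mul_le_mul_of_nonneg_left (L1 _) (by positivity)
      _ ≤ 4 * β / (1 - β) ^ ((5 : ℝ) / 2) := by
          rw [hrpow, ← hu2]
          have h5 : (0:ℝ) < u ^ 5 := by positivity
          have heq : u / 2 * (2 * β / (u ^ 2) ^ 3) + 1 / (2 * u) * (β / (u ^ 2) ^ 2)
              = 3 / 2 * β / u ^ 5 := by
            field_simp
            ring
          rw [heq]
          exact (div_le_div_iff_of_pos_right h5).mpr (by linarith)
  -- rewrite the double sum per k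
  have key : ∀ k, ∑ l ∈ Icc 1 (k - 1), x (k - l) * ∑ j ∈ Icc l (k - 1), β ^ j * Real.sqrt j
      = ∑ j ∈ Icc 1 (k - 1), (β ^ j * Real.sqrt j) * ∑ l ∈ Icc 1 j, x (k - l) := by
    intro k
    simp_rw [Finset.mul_sum]
    rw [Finset.sum_comm' (s := Icc 1 (k - 1)) (t := fun l => Icc l (k - 1))
        (t' := Icc 1 (k - 1)) (s' := fun j => Icc 1 j)
        (fun l j => by simp only [mem_Icc]; omega)]
    exact Finset.sum_congr rfl fun j _ => Finset.sum_congr rfl fun l _ => mul_comm _ _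
  calc ∑ k ∈ Icc 1 K, ∑ l ∈ Icc 1 (k - 1),
        x (k - l) * ∑ j ∈ Icc l (k - 1), β ^ j * Real.sqrt j
      = ∑ k ∈ Icc 1 K, ∑ j ∈ Icc 1 (k - 1),
          (β ^ j * Real.sqrt j) * ∑ l ∈ Icc 1 j, x (k - l) :=
        Finset.sum_congr rfl fun k _ => key k
    _ = ∑ j ∈ Icc 1 (K - 1), ∑ k ∈ Icc (j + 1) K,
          (β ^ j * Real.sqrt j) * ∑ l ∈ Icc 1 j, x (k - l) :=
        Finset.sum_comm' (fun k j => by simp only [mem_Icc]; omega)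
    _ ≤ ∑ j ∈ Icc 1 (K - 1), (β ^ j * Real.sqrt j) * ((j : ℝ) * S) := by
        apply Finset.sum_le_sum
        intro j hj
        rw [mem_Icc] at hj
        rw [← Finset.mul_sum]
        apply mul_le_mul_of_nonneg_left ?_ (by positivity)
        rw [Finset.sum_comm]
        calc ∑ l ∈ Icc 1 j, ∑ k ∈ Icc (j + 1) K, x (k - l)
            ≤ ∑ _l ∈ Icc 1 j, S := by
              apply Finset.sum_le_sum
              intro l hl
              rw [mem_Icc] at hl
              have himg : ∑ k ∈ Icc (j + 1) K, x (k - l)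
                  = ∑ m ∈ (Icc (j + 1) K).image (fun k => k - l), x m := by
                rw [Finset.sum_image]
                intro a ha b hb hab
                rw [Finset.coe_Icc, Set.mem_Icc] at ha hb
                simp only at hab
                omega
              rw [himg]
              apply Finset.sum_le_sum_of_subset_of_nonneg
              · intro m hm
                simp only [Finset.mem_image, mem_Icc] at hm ⊢
                obtain ⟨k, hk, rfl⟩ := hm
                omega
              · intro m hm _
                exact hx m hm
          _ = (j : ℝ) * S := by
              rw [Finset.sum_const, Nat.card_Icc]
              simp [Nat.add_sub_cancel, nsmul_eq_mul]
    _ = (∑ j ∈ Icc 1 (K - 1), (j : ℝ) * (β ^ j * Real.sqrt j)) * S := by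
        rw [Finset.sum_mul]
        exact Finset.sum_congr rfl fun j _ => by ring
    _ ≤ 4 * β / (1 - β) ^ ((5 : ℝ) / 2) * S := mul_le_mul_of_nonneg_right anal hS
end
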